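/- arXiv:1505.02839 — 2 statements merged into one kernel-verified Lean document; each statement's English description precedes it below -/
import Mathlib

section
/- Let (X,d) be a compact metric space and let ξ = ξ(x,ω) be a jointly measurable random field on X defined on a probability space (Ω,B,P) whose sample paths are almost surely continuous. Let Φ be an Orlicz function satisfying the Δ₂ condition, and suppose that the Luxemburg norm ‖ sup_{x∈X} |ξ(x)| ‖_Φ is finite. Then there exist a scaling function g on [0, diam(X)] and a non-negative random variable τ₀ with ‖τ₀‖_Φ = 1 such that, almost surely, Δ(ξ(·,ω), δ) ≤ τ₀(ω) · g(δ) for every δ ∈ [0, diam(X)]. -/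
open MeasureTheory Filter Set
open scoped ENNReal NNReal

/-- The modulus of continuity `Δ(f, δ)` of a function `f` on a metric space. -/
noncomputable def modCont {X : Type*} [MetricSpace X] (f : X → ℝ) (δ : ℝ) : ℝ :=
  sSup {r : ℝ | ∃ x y : X, dist x y ≤ δ ∧ r = |f x - f y|}

/-- An Orlicz (Young) function: even, convex, continuous, strictly increasing on `[0,∞)`,
vanishing at `0`, and tending to `∞` at `∞`. -/
structure IsOrliczFunction (Φ : ℝ → ℝ) : Prop where
  even : ∀ u, Φ (-u) = Φ u
  nonneg : ∀ u, 0 ≤ Φ u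
  convexOn : ConvexOn ℝ Set.univ Φ
  continuous : Continuous Φ
  strictMonoOn : StrictMonoOn Φ (Set.Ici 0)
  map_zero : Φ 0 = 0
  tendsto_atTop : Filter.Tendsto Φ Filter.atTop Filter.atTop

/-- The `Δ₂` condition: `limsup_{u→∞} Φ(2u)/Φ(u) < ∞`. -/
def OrliczDelta2 (Φ : ℝ → ℝ) : Prop :=
  ∃ C : ℝ, ∀ᶠ u in Filter.atTop, Φ (2 * u) ≤ C * Φ u

/-- The Luxemburg norm of a random variable `ζ` with respect to the Orlicz function `Φ`,
with value `∞` when `ζ` belongs to no ball of the Orlicz space. -/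
noncomputable def luxNorm {Ω : Type*} [MeasurableSpace Ω] (P : Measure Ω)
    (Φ : ℝ → ℝ) (ζ : Ω → ℝ) : ℝ≥0∞ :=
  sInf {c : ℝ≥0∞ | 0 < c ∧ c ≠ ∞ ∧
    ∫⁻ ω, ENNReal.ofReal (Φ (|ζ ω| / c.toReal)) ∂P ≤ 1}

/-- A scaling function on `[0, D]`: continuous, non-negative, nondecreasing, vanishing at `0`. -/
def IsScalingFunction (g : ℝ → ℝ) (D : ℝ) : Prop :=
  ContinuousOn g (Set.Icc 0 D) ∧ (∀ δ ∈ Set.Icc 0 D, 0 ≤ g δ) ∧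
    MonotoneOn g (Set.Icc 0 D) ∧ g 0 = 0

/-- `Ψ` is weaker than `Φ` (`Ψ << Φ`): for every `v > 0`, `Ψ(uv)/Φ(u) → 0` as `u → ∞`. -/
def OrliczWeaker (Ψ Φ : ℝ → ℝ) : Prop :=
  ∀ v : ℝ, 0 < v →
    Filter.Tendsto (fun u => Ψ (u * v) / Φ u) Filter.atTop (nhds 0)

/-!
Under `Δ₂`, finiteness of `‖sup |ξ|‖_Φ` gives `E Φ(c · sup |ξ|) < ∞` for every `c`, and
`Δ(ξ, δ) ≤ 2 sup |ξ|` tends to `0` with `δ`; by dominated convergence `E Φ(c Δ(ξ, δ)) → 0`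
for each `c`. Choosing levels `ℓₙ → 0` with `∑ₙ E Φ(2ⁿ⁺¹ Δ(ξ, ℓₙ)) < ∞`, the factor
`τ = supₙ 2ⁿ⁺¹ Δ(ξ, ℓₙ)` is a.s. finite with `E Φ(τ) < ∞`, since `Φ(sup) ≤ ∑ Φ`, and
bracketing `δ` between consecutive levels gives `Δ(ξ, δ) ≤ τ · ∑ₙ 2⁻ⁿ min(1, 2δ/ℓₙ)`.
Measurability in `ω` comes from computing the modulus on a countable dense set, at the price
of enlarging `δ` slightly; dividing `τ` by its Luxemburg norm gives `τ₀`.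
-/

open scoped Topology

section ModCont

variable {X : Type*} {f : X → ℝ} {δ δ' C : ℝ}

theorem abs_sub_le_two_mul (hC : ∀ x, |f x| ≤ C) (x y : X) : |f x - f y| ≤ 2 * C := by
  linarith [abs_sub (f x) (f y), hC x, hC y]

variable [MetricSpace X]

theorem modCont_nonneg (f : X → ℝ) (δ : ℝ) : 0 ≤ modCont f δ :=
  Real.sSup_nonneg <| by rintro _ ⟨x, y, -, rfl⟩; exact abs_nonneg _

theorem modCont_le {a : ℝ} (ha : 0 ≤ a) (h : ∀ x y, dist x y ≤ δ → |f x - f y| ≤ a) :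
    modCont f δ ≤ a :=
  Real.sSup_le (by rintro _ ⟨x, y, hxy, rfl⟩; exact h x y hxy) ha

theorem modCont_le_two_mul (hC0 : 0 ≤ C) (hC : ∀ x, |f x| ≤ C) : modCont f δ ≤ 2 * C :=
  modCont_le (by positivity) fun x y _ => abs_sub_le_two_mul hC x y

theorem abs_sub_le_modCont (hC : ∀ x, |f x| ≤ C) {x y : X} (hxy : dist x y ≤ δ) :
    |f x - f y| ≤ modCont f δ :=
  le_csSup ⟨2 * C, by rintro _ ⟨x, y, -, rfl⟩; exact abs_sub_le_two_mul hC x y⟩ ⟨x, y, hxy, rfl⟩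

theorem modCont_eq_iSup (f : X → ℝ) (δ : ℝ) :
    modCont f δ = ⨆ p : {p : X × X // dist p.1 p.2 ≤ δ}, |f p.1.1 - f p.1.2| := by
  rw [modCont, iSup]
  congr 1
  ext r
  simp [eq_comm]

theorem measurable_modCont {Ω : Type*} [MeasurableSpace Ω] [Countable X] {F : X → Ω → ℝ}
    (hF : ∀ x, Measurable (F x)) (δ : ℝ) : Measurable fun ω => modCont (fun x => F x ω) δ := by
  simp_rw [modCont_eq_iSup]
  exact Measurable.iSup fun p => ((hF _).sub (hF _)).abs

theorem tendsto_modCont_zero (hf : UniformContinuous f) : Tendsto (modCont f) (𝓝 0) (𝓝 0) := by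
  refine Metric.tendsto_nhds_nhds.2 fun ε hε => ?_
  obtain ⟨η, hη, hf⟩ := Metric.uniformContinuous_iff.1 hf (ε / 2) (half_pos hε)
  refine ⟨η, hη, fun δ hδ => ?_⟩
  have hle : modCont f δ ≤ ε / 2 := modCont_le (half_pos hε).le fun x y hxy =>
    (hf ((hxy.trans (le_abs_self δ)).trans_lt (by simpa using hδ))).le
  rw [Real.dist_eq, sub_zero, abs_of_nonneg (modCont_nonneg f δ)]
  linarith

theorem modCont_le_modCont_subtype (hf : Continuous f) {S : Set X} (hS : Dense S)
    (hC : ∀ x, |f x| ≤ C) (h : δ < δ') : modCont f δ ≤ modCont (fun y : S => f y) δ' := by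
  refine modCont_le (modCont_nonneg _ _) fun x y hxy => ?_
  have hU : IsOpen {p : X × X | dist p.1 p.2 < δ'} := isOpen_lt continuous_dist continuous_const
  have hxy' : (x, y) ∈ closure ({p : X × X | dist p.1 p.2 < δ'} ∩ S ×ˢ S) :=
    (hS.prod hS).open_subset_closure_inter hU (hxy.trans_lt h)
  refine le_on_closure (f := fun p : X × X => |f p.1 - f p.2|) (g := fun _ => _) ?_
    (by fun_prop) continuousOn_const hxy'
  rintro ⟨x', y'⟩ ⟨hd, hx', hy'⟩
  exact abs_sub_le_modCont (f := fun y : S => f y) (fun y => hC y)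
    (show dist (⟨x', hx'⟩ : S) ⟨y', hy'⟩ ≤ δ' from hd.le)

end ModCont

section DyadicScaling

noncomputable def dyadicScaling (r : ℕ → ℝ) (δ : ℝ) : ℝ :=
  ∑' n, (2⁻¹ : ℝ) ^ n * min 1 (max 0 (δ / r n))

variable {r : ℕ → ℝ}

theorem dyadicScaling_term_nonneg (r : ℕ → ℝ) (n : ℕ) (δ : ℝ) :
    0 ≤ (2⁻¹ : ℝ) ^ n * min 1 (max 0 (δ / r n)) :=
  mul_nonneg (by positivity) (le_min zero_le_one (le_max_left _ _))

theorem dyadicScaling_term_le (r : ℕ → ℝ) (n : ℕ) (δ : ℝ) :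
    (2⁻¹ : ℝ) ^ n * min 1 (max 0 (δ / r n)) ≤ 2⁻¹ ^ n :=
  mul_le_of_le_one_right (by positivity) (min_le_left _ _)

theorem summable_dyadicScaling (r : ℕ → ℝ) (δ : ℝ) :
    Summable fun n => (2⁻¹ : ℝ) ^ n * min 1 (max 0 (δ / r n)) :=
  .of_nonneg_of_le (dyadicScaling_term_nonneg r · δ) (dyadicScaling_term_le r · δ)
    (summable_geometric_of_lt_one (r := (2⁻¹ : ℝ)) (by norm_num) (by norm_num))

theorem continuous_dyadicScaling (r : ℕ → ℝ) : Continuous (dyadicScaling r) :=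
  continuous_tsum (fun n => by fun_prop)
    (summable_geometric_of_lt_one (r := (2⁻¹ : ℝ)) (by norm_num) (by norm_num)) fun n δ => by
      rw [Real.norm_of_nonneg (dyadicScaling_term_nonneg r n δ)]
      exact dyadicScaling_term_le r n δ

theorem monotone_dyadicScaling (hr : ∀ n, 0 ≤ r n) : Monotone (dyadicScaling r) :=
  fun _ _ hab => Summable.tsum_le_tsum (fun n => by gcongr; exact hr n)
    (summable_dyadicScaling r _) (summable_dyadicScaling r _)

theorem dyadicScaling_zero (r : ℕ → ℝ) : dyadicScaling r 0 = 0 := by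
  simp [dyadicScaling]

theorem pow_le_dyadicScaling {n : ℕ} {δ : ℝ} (hr : 0 < r n) (h : r n ≤ δ) :
    (2⁻¹ : ℝ) ^ n ≤ dyadicScaling r δ := by
  have h1 : 1 ≤ δ / r n := (one_le_div hr).2 h
  calc (2⁻¹ : ℝ) ^ n = 2⁻¹ ^ n * min 1 (max 0 (δ / r n)) := by
        rw [max_eq_right (zero_le_one.trans h1), min_eq_left h1, mul_one]
    _ ≤ dyadicScaling r δ :=
        (summable_dyadicScaling r δ).le_tsum n fun m _ => dyadicScaling_term_nonneg r m δ

theorem isScalingFunction_dyadicScaling (hr : ∀ n, 0 ≤ r n) (D : ℝ) :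
    IsScalingFunction (dyadicScaling r) D :=
  ⟨(continuous_dyadicScaling r).continuousOn,
    fun _ _ => tsum_nonneg (dyadicScaling_term_nonneg r · _),
    (monotone_dyadicScaling hr).monotoneOn _, dyadicScaling_zero r⟩

theorem IsScalingFunction.const_mul {g : ℝ → ℝ} {D c : ℝ} (hg : IsScalingFunction g D)
    (hc : 0 ≤ c) : IsScalingFunction (fun δ => c * g δ) D :=
  ⟨continuousOn_const.mul hg.1, fun δ hδ => mul_nonneg hc (hg.2.1 δ hδ),
    fun _ ha _ hb hab => mul_le_mul_of_nonneg_left (hg.2.2.1 ha hb hab) hc, by simp [hg.2.2.2]⟩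

theorem le_mul_dyadicScaling (hr : ∀ n, 0 < r n) (hr0 : Tendsto r atTop (𝓝 0)) {φ : ℝ → ℝ}
    {t δ : ℝ} (ht : 0 ≤ t) (hφ : ∀ n δ, 0 ≤ δ → δ ≤ r n → 2 ^ (n + 1) * φ δ ≤ t)
    (htop : φ δ ≤ t) (hδ : 0 ≤ δ) : φ δ ≤ t * dyadicScaling r δ := by
  classical
  rcases hδ.eq_or_lt with rfl | hδ
  · have hlim : Tendsto (fun n : ℕ => (2⁻¹ : ℝ) ^ (n + 1) * t) atTop (𝓝 0) := by
      simpa using ((tendsto_pow_atTop_nhds_zero_of_lt_one (r := (2⁻¹ : ℝ)) (by norm_num)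
        (by norm_num)).comp (tendsto_add_atTop_nat 1)).mul_const t
    refine (ge_of_tendsto' hlim fun n => ?_).trans_eq (by rw [dyadicScaling_zero, mul_zero])
    rw [inv_pow, inv_mul_eq_div, le_div_iff₀' (by positivity)]
    exact hφ n 0 le_rfl (hr n).le
  have hex : ∃ m, r m < δ := ((hr0.eventually (gt_mem_nhds hδ))).exists
  rcases hm : Nat.find hex with _ | n
  · calc φ δ ≤ t := htop
      _ = t * 2⁻¹ ^ 0 := by simp
      _ ≤ t * dyadicScaling r δ :=
        mul_le_mul_of_nonneg_left (pow_le_dyadicScaling (hr 0) (hm ▸ Nat.find_spec hex).le) ht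
  · have hδn : δ ≤ r n := not_lt.1 (Nat.find_min hex (hm ▸ n.lt_succ_self))
    calc φ δ ≤ 2⁻¹ ^ (n + 1) * t := by
          rw [inv_pow, inv_mul_eq_div, le_div_iff₀' (by positivity)]
          exact hφ n δ hδ.le hδn
      _ ≤ t * dyadicScaling r δ := by
          rw [mul_comm]
          exact mul_le_mul_of_nonneg_left
            (pow_le_dyadicScaling (hr _) (hm ▸ Nat.find_spec hex).le) ht

end DyadicScaling

namespace IsOrliczFunction

variable {Φ : ℝ → ℝ} (hΦ : IsOrliczFunction Φ)
include hΦ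

theorem mono {a b : ℝ} (ha : 0 ≤ a) (hab : a ≤ b) : Φ a ≤ Φ b :=
  hΦ.strictMonoOn.monotoneOn ha (ha.trans hab) hab

theorem apply_abs (u : ℝ) : Φ |u| = Φ u := by
  rcases abs_choice u with h | h <;> simp [h, hΦ.even]

theorem apply_le_apply_of_abs_le {u v : ℝ} (h : |u| ≤ |v|) : Φ u ≤ Φ v := by
  simpa only [hΦ.apply_abs] using hΦ.mono (abs_nonneg u) h

theorem apply_mul_le {t : ℝ} (ht0 : 0 ≤ t) (ht1 : t ≤ 1) (u : ℝ) : Φ (t * u) ≤ t * Φ u := by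
  have := hΦ.convexOn.2 (mem_univ u) (mem_univ 0) ht0 (sub_nonneg.2 ht1) (add_sub_cancel t 1)
  simpa [hΦ.map_zero] using this

theorem exists_lt_apply (B : ℝ) : ∃ u, 0 ≤ u ∧ B < Φ u :=
  ((eventually_ge_atTop 0).and (hΦ.tendsto_atTop.eventually_gt_atTop B)).exists

theorem apply_max_le_add (a b : ℝ) : Φ (max a b) ≤ Φ a + Φ b := by
  rcases le_total a b with h | h
  · rw [max_eq_right h]; linarith [hΦ.nonneg a]
  · rw [max_eq_left h]; linarith [hΦ.nonneg b]

theorem ofReal_apply_iSup_le_tsum {ι : Type*} {a : ι → ℝ} (ha : ∀ i, 0 ≤ a i) :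
    ENNReal.ofReal (Φ (⨆ i, a i)) ≤ ∑' i, ENNReal.ofReal (Φ (a i)) := by
  by_cases hbdd : BddAbove (range a)
  · rcases isEmpty_or_nonempty ι with hι | hι
    · simp [Real.iSup_of_isEmpty, hΦ.map_zero]
    have hmono : Monotone fun u => ENNReal.ofReal (Φ (max u 0)) := fun u v huv =>
      ENNReal.ofReal_le_ofReal (hΦ.mono (le_max_right u 0) (max_le_max_right 0 huv))
    have hmap := hmono.map_ciSup_of_continuousAt (ENNReal.continuous_ofReal.comp
      (hΦ.continuous.comp (continuous_id.max continuous_const))).continuousAt hbdd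
    simp only [Function.comp_apply, id, max_eq_left (Real.iSup_nonneg ha), max_eq_left (ha _)]
      at hmap
    exact hmap ▸ iSup_le ENNReal.le_tsum
  · -- an unbounded real supremum is `0`
    simp [Real.iSup_of_not_bddAbove hbdd, hΦ.map_zero]

theorem bddAbove_of_tsum_ne_top {ι : Type*} {a : ι → ℝ}
    (h : ∑' i, ENNReal.ofReal (Φ (a i)) ≠ ∞) : BddAbove (range a) := by
  obtain ⟨u, hu, hlt⟩ := hΦ.exists_lt_apply (∑' i, ENNReal.ofReal (Φ (a i))).toReal
  refine ⟨u, forall_mem_range.2 fun i => le_of_not_gt fun hi => hlt.not_ge ?_⟩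
  calc Φ u ≤ Φ (a i) := hΦ.mono hu hi.le
    _ ≤ _ := (ENNReal.ofReal_le_iff_le_toReal h).1 (ENNReal.le_tsum i)

end IsOrliczFunction

theorem OrliczDelta2.exists_le_mul_add {Φ : ℝ → ℝ} (hΦ2 : OrliczDelta2 Φ)
    (hΦ : IsOrliczFunction Φ) : ∃ C K : ℝ, 0 ≤ C ∧ ∀ u, 0 ≤ u → Φ (2 * u) ≤ C * Φ u + K := by
  obtain ⟨C, hC⟩ := hΦ2
  obtain ⟨u₀, hu₀⟩ := eventually_atTop.1 hC
  refine ⟨max C 0, Φ (2 * max u₀ 0), le_max_right _ _, fun u hu => ?_⟩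
  have hCΦ : C * Φ u ≤ max C 0 * Φ u :=
    mul_le_mul_of_nonneg_right (le_max_left _ _) (hΦ.nonneg u)
  rcases le_total u (max u₀ 0) with h | h
  · linarith [hΦ.mono (by positivity) (mul_le_mul_of_nonneg_left h zero_le_two),
      mul_nonneg (le_max_right C 0) (hΦ.nonneg u)]
  · linarith [hu₀ u ((le_max_left _ _).trans h), hΦ.nonneg (2 * max u₀ 0)]

section Modular

variable {Ω : Type*} [MeasurableSpace Ω] {P : Measure Ω} {Φ : ℝ → ℝ}

noncomputable def orliczModular (P : Measure Ω) (Φ : ℝ → ℝ) (f : Ω → ℝ) : ℝ≥0∞ :=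
  ∫⁻ ω, ENNReal.ofReal (Φ (f ω)) ∂P

theorem IsOrliczFunction.measurable_ofReal_comp (hΦ : IsOrliczFunction Φ) {f : Ω → ℝ}
    (hf : Measurable f) : Measurable fun ω => ENNReal.ofReal (Φ (f ω)) :=
  ENNReal.measurable_ofReal.comp (hΦ.continuous.measurable.comp hf)

theorem orliczModular_mono (hΦ : IsOrliczFunction Φ) {f g : Ω → ℝ}
    (h : ∀ᵐ ω ∂P, |f ω| ≤ |g ω|) : orliczModular P Φ f ≤ orliczModular P Φ g :=
  lintegral_mono_ae <| h.mono fun _ hω =>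
    ENNReal.ofReal_le_ofReal (hΦ.apply_le_apply_of_abs_le hω)

theorem orliczModular_const (u : ℝ) :
    orliczModular P Φ (fun _ => u) = ENNReal.ofReal (Φ u) * P univ :=
  lintegral_const _

theorem orliczModular_max_le (hΦ : IsOrliczFunction Φ) {f : Ω → ℝ} (hf : Measurable f)
    (g : Ω → ℝ) :
    orliczModular P Φ (fun ω => max (f ω) (g ω)) ≤ orliczModular P Φ f + orliczModular P Φ g := by
  unfold orliczModular
  rw [← lintegral_add_left (hΦ.measurable_ofReal_comp hf)]
  exact lintegral_mono fun ω =>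
    (ENNReal.ofReal_le_ofReal (hΦ.apply_max_le_add _ _)).trans ENNReal.ofReal_add_le

theorem orliczModular_iSup_le (hΦ : IsOrliczFunction Φ) {ι : Type*} [Countable ι]
    {a : ι → Ω → ℝ} (ha : ∀ i, Measurable (a i)) (ha0 : ∀ i ω, 0 ≤ a i ω) :
    orliczModular P Φ (fun ω => ⨆ i, a i ω) ≤ ∑' i, orliczModular P Φ (a i) := by
  unfold orliczModular
  rw [← lintegral_tsum fun i => (hΦ.measurable_ofReal_comp (ha i)).aemeasurable]
  exact lintegral_mono fun ω => hΦ.ofReal_apply_iSup_le_tsum (ha0 · ω)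

theorem ae_bddAbove_of_tsum_orliczModular_ne_top (hΦ : IsOrliczFunction Φ) {ι : Type*}
    [Countable ι] {a : ι → Ω → ℝ} (ha : ∀ i, Measurable (a i))
    (h : ∑' i, orliczModular P Φ (a i) ≠ ∞) : ∀ᵐ ω ∂P, BddAbove (range fun i => a i ω) := by
  have hmeas i := hΦ.measurable_ofReal_comp (ha i)
  have hfin := ae_lt_top (Measurable.tsum hmeas)
    (by rwa [lintegral_tsum fun i => (hmeas i).aemeasurable])
  filter_upwards [hfin] with ω hω using hΦ.bddAbove_of_tsum_ne_top hω.ne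

theorem tendsto_orliczModular_zero (hΦ : IsOrliczFunction Φ) {ι : Type*} {l : Filter ι}
    [l.IsCountablyGenerated] {F : ι → Ω → ℝ} {B : Ω → ℝ} (hF : ∀ i, Measurable (F i))
    (hFB : ∀ i, ∀ᵐ ω ∂P, |F i ω| ≤ B ω) (hB : orliczModular P Φ B ≠ ∞)
    (hlim : ∀ᵐ ω ∂P, Tendsto (fun i => F i ω) l (𝓝 0)) :
    Tendsto (fun i => orliczModular P Φ (F i)) l (𝓝 0) := by
  have := tendsto_lintegral_filter_of_dominated_convergence (μ := P)
    (fun ω => ENNReal.ofReal (Φ (B ω))) (.of_forall fun i => hΦ.measurable_ofReal_comp (hF i))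
    (.of_forall fun i => (hFB i).mono fun ω h =>
      ENNReal.ofReal_le_ofReal (hΦ.apply_le_apply_of_abs_le (h.trans (le_abs_self _)))) hB
    (hlim.mono fun ω h => ((ENNReal.continuous_ofReal.comp hΦ.continuous).tendsto 0).comp h)
  simpa [orliczModular, hΦ.map_zero] using this

theorem orliczModular_two_mul_ne_top [IsFiniteMeasure P] (hΦ : IsOrliczFunction Φ)
    (hΦ2 : OrliczDelta2 Φ) {f : Ω → ℝ} (hf : ∀ ω, 0 ≤ f ω) (h : orliczModular P Φ f ≠ ∞) :
    orliczModular P Φ (fun ω => 2 * f ω) ≠ ∞ := by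
  obtain ⟨C, K, hC, hCK⟩ := hΦ2.exists_le_mul_add hΦ
  refine ne_top_of_le_ne_top
    (b := ENNReal.ofReal C * orliczModular P Φ f + ENNReal.ofReal K * P univ) (by finiteness) ?_
  calc orliczModular P Φ (fun ω => 2 * f ω)
      ≤ ∫⁻ ω, ENNReal.ofReal C * ENNReal.ofReal (Φ (f ω)) + ENNReal.ofReal K ∂P :=
        lintegral_mono fun ω => (ENNReal.ofReal_le_ofReal (hCK _ (hf ω))).trans <|
          ENNReal.ofReal_add_le.trans_eq (by rw [ENNReal.ofReal_mul hC])
    _ = _ := by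
        rw [lintegral_add_right _ measurable_const, lintegral_const_mul' _ _ ENNReal.ofReal_ne_top,
          lintegral_const]
        rfl

theorem orliczModular_max_one_max_iSup_ne_top [IsFiniteMeasure P] (hΦ : IsOrliczFunction Φ)
    {ι : Type*} [Countable ι] {b : Ω → ℝ} {a : ι → Ω → ℝ} (hb : Measurable b)
    (ha : ∀ i, Measurable (a i)) (ha0 : ∀ i ω, 0 ≤ a i ω) (hb_fin : orliczModular P Φ b ≠ ∞)
    (ha_fin : ∑' i, orliczModular P Φ (a i) ≠ ∞) :
    orliczModular P Φ (fun ω => max (max 1 (b ω)) (⨆ i, a i ω)) ≠ ∞ := by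
  refine ne_top_of_le_ne_top ?_ ((orliczModular_max_le hΦ (measurable_const.max hb) _).trans
    (add_le_add (orliczModular_max_le hΦ measurable_const _) (orliczModular_iSup_le hΦ ha ha0)))
  rw [orliczModular_const]
  finiteness

theorem exists_orliczModular_le_one {ζ : Ω → ℝ} (h : luxNorm P Φ ζ < ∞) :
    ∃ c : ℝ, 0 < c ∧ orliczModular P Φ (fun ω => |ζ ω| / c) ≤ 1 := by
  obtain ⟨c, ⟨hc0, hctop, hc⟩, -⟩ := sInf_lt_iff.1 h
  exact ⟨c.toReal, ENNReal.toReal_pos hc0.ne' hctop, hc⟩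

theorem orliczModular_mul_abs_ne_top [IsFiniteMeasure P] (hΦ : IsOrliczFunction Φ)
    (hΦ2 : OrliczDelta2 Φ) {ζ : Ω → ℝ} (hζ : luxNorm P Φ ζ < ∞) (b : ℝ) :
    orliczModular P Φ (fun ω => b * |ζ ω|) ≠ ∞ := by
  obtain ⟨c, hc, hζc⟩ := exists_orliczModular_le_one hζ
  have hpow (m : ℕ) : orliczModular P Φ (fun ω => 2 ^ m * (|ζ ω| / c)) ≠ ∞ := by
    induction m with
    | zero => simpa using ne_top_of_le_ne_top ENNReal.one_ne_top hζc
    | succ m ih =>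
        convert orliczModular_two_mul_ne_top hΦ hΦ2 (fun ω => by positivity) ih using 3
        ring
  obtain ⟨m, hm⟩ := pow_unbounded_of_one_lt (|b| * c) one_lt_two
  refine ne_top_of_le_ne_top (hpow m) (orliczModular_mono hΦ (ae_of_all _ fun ω => ?_))
  rw [abs_mul, abs_abs, abs_of_nonneg (show (0 : ℝ) ≤ 2 ^ m * (|ζ ω| / c) by positivity)]
  calc |b| * |ζ ω| = |b| * c * (|ζ ω| / c) := by field_simp
    _ ≤ 2 ^ m * (|ζ ω| / c) := by gcongr

end Modular

section Luxemburg

variable {Ω : Type*} [MeasurableSpace Ω] {P : Measure Ω} {Φ : ℝ → ℝ}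

theorem luxNorm_lt_top (hΦ : IsOrliczFunction Φ) {ζ : Ω → ℝ}
    (h : orliczModular P Φ (fun ω => |ζ ω|) ≠ ∞) : luxNorm P Φ ζ < ∞ := by
  set c := max 1 (orliczModular P Φ fun ω => |ζ ω|).toReal
  have hc : 1 ≤ c := le_max_left _ _
  have hc0 : 0 < c := one_pos.trans_le hc
  refine (sInf_le ⟨ENNReal.ofReal_pos.2 hc0, ENNReal.ofReal_ne_top, ?_⟩ :
    luxNorm P Φ ζ ≤ ENNReal.ofReal c).trans_lt ENNReal.ofReal_lt_top
  change orliczModular P Φ (fun ω => |ζ ω| / (ENNReal.ofReal c).toReal) ≤ 1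
  rw [ENNReal.toReal_ofReal hc0.le]
  calc orliczModular P Φ (fun ω => |ζ ω| / c)
      ≤ ∫⁻ ω, ENNReal.ofReal c⁻¹ * ENNReal.ofReal (Φ |ζ ω|) ∂P := lintegral_mono fun ω => by
        dsimp only
        rw [← ENNReal.ofReal_mul (by positivity), div_eq_inv_mul]
        exact ENNReal.ofReal_le_ofReal
          (hΦ.apply_mul_le (by positivity) (inv_le_one_of_one_le₀ hc) _)
    _ = ENNReal.ofReal c⁻¹ * orliczModular P Φ (fun ω => |ζ ω|) :=
        lintegral_const_mul' _ _ ENNReal.ofReal_ne_top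
    _ ≤ ENNReal.ofReal c⁻¹ * ENNReal.ofReal c := by
        gcongr
        rw [← ENNReal.ofReal_toReal h]
        exact ENNReal.ofReal_le_ofReal (le_max_right _ _)
    _ = 1 := by
        rw [← ENNReal.ofReal_mul (by positivity), inv_mul_cancel₀ hc0.ne', ENNReal.ofReal_one]

theorem luxNorm_pos [IsProbabilityMeasure P] (hΦ : IsOrliczFunction Φ) {ζ : Ω → ℝ} {u : ℝ}
    (hu : 0 < u) (h : ∀ ω, u ≤ |ζ ω|) : 0 < luxNorm P Φ ζ := by
  obtain ⟨v, hv, hΦv⟩ := hΦ.exists_lt_apply 1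
  have hv0 : 0 < v := hv.lt_of_ne <| by rintro rfl; linarith [hΦ.map_zero]
  refine (ENNReal.ofReal_pos.2 (div_pos hu hv0)).trans_le (le_sInf ?_)
  rintro c ⟨hc0, hctop, hc⟩
  have hcr : 0 < c.toReal := ENNReal.toReal_pos hc0.ne' hctop
  have hΦuc : Φ (u / c.toReal) ≤ 1 := by
    have hle : orliczModular P Φ (fun _ => u / c.toReal) ≤ 1 :=
      (orliczModular_mono hΦ (ae_of_all _ fun ω => by
        rw [abs_of_pos (by positivity), abs_of_nonneg (by positivity)]
        gcongr
        exact h ω)).trans hc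
    rwa [orliczModular_const, measure_univ, mul_one, ENNReal.ofReal_le_one] at hle
  have huc : u / c.toReal < v :=
    lt_of_not_ge fun hvu => (hΦv.trans_le (hΦ.mono hv hvu)).not_ge hΦuc
  rw [← ENNReal.ofReal_toReal hctop]
  refine ENNReal.ofReal_le_ofReal ((div_le_iff₀ hv0).2 ?_)
  linarith [(div_lt_iff₀ hcr).1 huc]

theorem luxNorm_div_const (ζ : Ω → ℝ) {a : ℝ} (ha : 0 < a) :
    luxNorm P Φ (fun ω => ζ ω / a) = luxNorm P Φ ζ / ENNReal.ofReal a := by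
  have ha0 : ENNReal.ofReal a ≠ 0 := (ENNReal.ofReal_pos.2 ha).ne'
  set e := ENNReal.mulLeftOrderIso (ENNReal.ofReal a)
    (ENNReal.isUnit_iff.2 ⟨ha0, ENNReal.ofReal_ne_top⟩)
  have hset : {c : ℝ≥0∞ | 0 < c ∧ c ≠ ∞ ∧
      ∫⁻ ω, ENNReal.ofReal (Φ (|ζ ω / a| / c.toReal)) ∂P ≤ 1} =
      e ⁻¹' {c | 0 < c ∧ c ≠ ∞ ∧ ∫⁻ ω, ENNReal.ofReal (Φ (|ζ ω| / c.toReal)) ∂P ≤ 1} := by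
    ext c
    simp [e, ENNReal.toReal_mul, ENNReal.toReal_ofReal ha.le, abs_div, abs_of_pos ha, div_div,
      mul_comm, ha, ENNReal.mul_eq_top]
  rw [ENNReal.eq_div_iff ha0 ENNReal.ofReal_ne_top, luxNorm, hset]
  exact (e.map_sInf_eq_sInf_symm_preimage _).trans
    (congr_arg sInf (e.symm.preimage_symm_preimage _))

theorem luxNorm_div_toReal_luxNorm {ζ : Ω → ℝ} (h0 : 0 < luxNorm P Φ ζ)
    (htop : luxNorm P Φ ζ < ∞) :
    luxNorm P Φ (fun ω => ζ ω / (luxNorm P Φ ζ).toReal) = 1 := by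
  rw [luxNorm_div_const _ (ENNReal.toReal_pos h0.ne' htop.ne), ENNReal.ofReal_toReal htop.ne,
    ENNReal.div_self h0.ne' htop.ne]

end Luxemburg

theorem exists_seq_tendsto_zero_tsum_ne_top {m : ℕ → ℝ → ℝ≥0∞}
    (hm : ∀ n, Tendsto (m n) (𝓝[>] 0) (𝓝 0)) :
    ∃ ℓ : ℕ → ℝ, (∀ n, 0 < ℓ n) ∧ Tendsto ℓ atTop (𝓝 0) ∧ ∑' n, m n (ℓ n) ≠ ∞ := by
  have h (n : ℕ) : ∃ ℓ, ℓ ∈ Ioo 0 ((2⁻¹ : ℝ) ^ n) ∧ m n ℓ < 2⁻¹ ^ n := by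
    have hIoo : ∀ᶠ ℓ in 𝓝[>] (0 : ℝ), ℓ ∈ Ioo 0 ((2⁻¹ : ℝ) ^ n) :=
      Ioo_mem_nhdsGT (by positivity)
    exact (hIoo.and ((hm n).eventually (gt_mem_nhds (ENNReal.pow_pos (by norm_num) n)))).exists
  choose ℓ hℓ hmℓ using h
  refine ⟨ℓ, fun n => (hℓ n).1, squeeze_zero (fun n => (hℓ n).1.le) (fun n => (hℓ n).2.le)
    (tendsto_pow_atTop_nhds_zero_of_lt_one (by norm_num) (by norm_num)), ?_⟩
  refine ne_top_of_le_ne_top ?_ (ENNReal.tsum_le_tsum fun n => (hmℓ n).le)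
  rw [ENNReal.tsum_geometric, ENNReal.one_sub_inv_two, inv_inv]
  exact ENNReal.ofNat_ne_top

section RandomField

variable {X Ω : Type*} [MetricSpace X] [CompactSpace X] [MeasurableSpace Ω] {P : Measure Ω}
  [IsFiniteMeasure P] {ξ : X → Ω → ℝ} {Φ : ℝ → ℝ}

theorem modCont_subtype_le_two_mul_iSup {f : X → ℝ} (hf : Continuous f) (S : Set X) (δ : ℝ) :
    modCont (fun y : S => f y) δ ≤ 2 * |(⨆ x, |f x|)| := by
  rw [abs_of_nonneg (Real.iSup_nonneg fun x => abs_nonneg (f x))]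
  exact modCont_le_two_mul (Real.iSup_nonneg fun x => abs_nonneg _)
    fun y => le_ciSup (isCompact_range hf.abs).bddAbove (y : X)

theorem tendsto_orliczModular_mul_modCont_subtype (hΦ : IsOrliczFunction Φ)
    (hΦ2 : OrliczDelta2 Φ) {S : Set X} (hS : S.Countable) (hξ : ∀ x, Measurable (ξ x))
    (hcont : ∀ᵐ ω ∂P, Continuous fun x => ξ x ω)
    (hfin : luxNorm P Φ (fun ω => ⨆ x : X, |ξ x ω|) < ∞) (c : ℝ) :
    Tendsto (fun δ => orliczModular P Φ fun ω => c * modCont (fun y : S => ξ y ω) δ)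
      (𝓝 0) (𝓝 0) := by
  have := hS.to_subtype
  refine tendsto_orliczModular_zero hΦ
    (fun δ => (measurable_modCont (fun y : S => hξ y) δ).const_mul c)
    (fun δ => hcont.mono fun ω hω => ?_) (orliczModular_mul_abs_ne_top hΦ hΦ2 hfin (2 * |c|))
    (hcont.mono fun ω hω => ?_)
  · rw [abs_mul, abs_of_nonneg (modCont_nonneg _ _), mul_comm 2, mul_assoc]
    exact mul_le_mul_of_nonneg_left (modCont_subtype_le_two_mul_iSup hω S δ) (abs_nonneg c)
  · have hf : UniformContinuous fun y : S => ξ y ω :=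
      (CompactSpace.uniformContinuous_of_continuous hω).comp uniformContinuous_subtype_val
    simpa using (tendsto_modCont_zero hf).const_mul c

theorem exists_modCont_le_mul_scaling (hΦ : IsOrliczFunction Φ) (hΦ2 : OrliczDelta2 Φ)
    (hξ : ∀ x, Measurable (ξ x)) (hcont : ∀ᵐ ω ∂P, Continuous fun x => ξ x ω)
    (hfin : luxNorm P Φ (fun ω => ⨆ x : X, |ξ x ω|) < ∞) :
    ∃ (g : ℝ → ℝ) (τ : Ω → ℝ), IsScalingFunction g (Metric.diam (univ : Set X)) ∧
      Measurable τ ∧ (∀ ω, 1 ≤ τ ω) ∧ orliczModular P Φ τ ≠ ∞ ∧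
      ∀ᵐ ω ∂P, ∀ δ ∈ Icc (0 : ℝ) (Metric.diam (univ : Set X)),
        modCont (fun x => ξ x ω) δ ≤ τ ω * g δ := by
  obtain ⟨S, hS, hS_dense⟩ := TopologicalSpace.exists_countable_dense X
  have := hS.to_subtype
  set D : ℝ → Ω → ℝ := fun δ ω => modCont (fun y : S => ξ y ω) δ
  have hD (δ : ℝ) : Measurable (D δ) := measurable_modCont (fun y : S => hξ y) δ
  obtain ⟨ℓ, hℓ, hℓ0, hsum⟩ := exists_seq_tendsto_zero_tsum_ne_top fun n =>
    (tendsto_orliczModular_mul_modCont_subtype hΦ hΦ2 hS hξ hcont hfin (2 ^ (n + 1))).mono_left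
      nhdsWithin_le_nhds
  set a : ℕ → Ω → ℝ := fun n ω => 2 ^ (n + 1) * D (ℓ n) ω
  have ha (n : ℕ) : Measurable (a n) := (hD _).const_mul _
  set top := Metric.diam (univ : Set X) + 1
  set τ : Ω → ℝ := fun ω => max (max 1 (D top ω)) (⨆ n, a n ω)
  refine ⟨dyadicScaling (ℓ · / 2), τ,
    isScalingFunction_dyadicScaling (fun n => (half_pos (hℓ n)).le) _,
    (measurable_const.max (hD _)).max (.iSup ha), fun ω => le_max_of_le_left (le_max_left _ _),
    ?_, ?_⟩
  · have htop : orliczModular P Φ (D top) ≠ ∞ :=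
      ne_top_of_le_ne_top (orliczModular_mul_abs_ne_top hΦ hΦ2 hfin 2)
        (orliczModular_mono hΦ (hcont.mono fun ω hω => by
          rw [abs_of_nonneg (modCont_nonneg _ _), abs_of_nonneg (by positivity)]
          exact modCont_subtype_le_two_mul_iSup hω S top))
    exact orliczModular_max_one_max_iSup_ne_top hΦ (hD top) ha
      (fun n ω => mul_nonneg (by positivity) (modCont_nonneg _ _)) htop hsum
  · filter_upwards [hcont, ae_bddAbove_of_tsum_orliczModular_ne_top hΦ ha hsum]
      with ω hω hbdd δ hδ
    have hC (x : X) : |ξ x ω| ≤ ⨆ x, |ξ x ω| := le_ciSup (isCompact_range hω.abs).bddAbove x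
    refine le_mul_dyadicScaling (fun n => half_pos (hℓ n)) (by simpa using hℓ0.div_const 2)
      (zero_le_one.trans (le_max_of_le_left (le_max_left _ _))) (fun n δ' _ hδ'n => ?_) ?_ hδ.1
    · calc 2 ^ (n + 1) * modCont (fun x => ξ x ω) δ' ≤ a n ω :=
            mul_le_mul_of_nonneg_left (modCont_le_modCont_subtype hω hS_dense hC
              (hδ'n.trans_lt (half_lt_self (hℓ n)))) (by positivity)
        _ ≤ ⨆ n, a n ω := le_ciSup hbdd n
        _ ≤ τ ω := le_max_right _ _
    · calc modCont (fun x => ξ x ω) δ ≤ D top ω :=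
            modCont_le_modCont_subtype hω hS_dense hC (by linarith [hδ.2])
        _ ≤ τ ω := (le_max_right _ _).trans (le_max_left _ _)

end RandomField

theorem factorable_continuity_orlicz_delta2_general
    {X Ω : Type*} [MetricSpace X] [CompactSpace X]
    [MeasurableSpace X] [MeasurableSpace Ω]
    (P : Measure Ω) [IsProbabilityMeasure P]
    (ξ : X → Ω → ℝ)
    (hmeas : Measurable fun p : X × Ω => ξ p.1 p.2)
    (hcont : ∀ᵐ ω ∂P, Continuous fun x => ξ x ω)
    (Φ : ℝ → ℝ) (hΦ : IsOrliczFunction Φ) (hΦ2 : OrliczDelta2 Φ)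
    (hfin : luxNorm P Φ (fun ω => ⨆ x : X, |ξ x ω|) < ∞) :
    ∃ (g : ℝ → ℝ) (τ₀ : Ω → ℝ),
      IsScalingFunction g (Metric.diam (Set.univ : Set X)) ∧
      Measurable τ₀ ∧ (∀ ω, 0 ≤ τ₀ ω) ∧ luxNorm P Φ τ₀ = 1 ∧
      ∀ᵐ ω ∂P, ∀ δ ∈ Set.Icc (0 : ℝ) (Metric.diam (Set.univ : Set X)),
        modCont (fun x => ξ x ω) δ ≤ τ₀ ω * g δ := by
  obtain ⟨g, τ, hg, hτ, hτ1, hτΦ, hbound⟩ := exists_modCont_le_mul_scaling hΦ hΦ2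
    (fun x => hmeas.comp (measurable_const.prodMk measurable_id)) hcont hfin
  have hτ_abs : orliczModular P Φ (fun ω => |τ ω|) ≠ ∞ := by
    simpa only [abs_of_nonneg (zero_le_one.trans (hτ1 _))] using hτΦ
  have hN0 : 0 < luxNorm P Φ τ := luxNorm_pos hΦ one_pos fun ω => (hτ1 ω).trans (le_abs_self _)
  have hNtop : luxNorm P Φ τ < ∞ := luxNorm_lt_top hΦ hτ_abs
  set N := (luxNorm P Φ τ).toReal
  have hN : 0 < N := ENNReal.toReal_pos hN0.ne' hNtop.ne
  refine ⟨fun δ => N * g δ, fun ω => τ ω / N, hg.const_mul hN.le, hτ.div_const N,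
    fun ω => div_nonneg (zero_le_one.trans (hτ1 ω)) hN.le,
    luxNorm_div_toReal_luxNorm hN0 hNtop, ?_⟩
  filter_upwards [hbound] with ω hω δ hδ
  calc modCont (fun x => ξ x ω) δ ≤ τ ω * g δ := hω δ hδ
    _ = τ ω / N * (N * g δ) := by field_simp

/-- factorable continuity with a normed factor in `L(Φ)`, for an Orlicz
function `Φ` satisfying the `Δ₂` condition. -/
theorem factorable_continuity_orlicz_delta2
    {X Ω : Type*} [MetricSpace X] [CompactSpace X]
    [MeasurableSpace X] [BorelSpace X] [MeasurableSpace Ω]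
    (P : Measure Ω) [IsProbabilityMeasure P]
    (ξ : X → Ω → ℝ)
    (hmeas : Measurable fun p : X × Ω => ξ p.1 p.2)
    (hcont : ∀ᵐ ω ∂P, Continuous fun x => ξ x ω)
    (Φ : ℝ → ℝ) (hΦ : IsOrliczFunction Φ) (hΦ2 : OrliczDelta2 Φ)
    (hfin : luxNorm P Φ (fun ω => ⨆ x : X, |ξ x ω|) < ∞) :
    ∃ (g : ℝ → ℝ) (τ₀ : Ω → ℝ),
      IsScalingFunction g (Metric.diam (Set.univ : Set X)) ∧
      Measurable τ₀ ∧ (∀ ω, 0 ≤ τ₀ ω) ∧ luxNorm P Φ τ₀ = 1 ∧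
      ∀ᵐ ω ∂P, ∀ δ ∈ Set.Icc (0 : ℝ) (Metric.diam (Set.univ : Set X)),
        modCont (fun x => ξ x ω) δ ≤ τ₀ ω * g δ :=
  factorable_continuity_orlicz_delta2_general P ξ hmeas hcont Φ hΦ hΦ2 hfin
end

section
/- Let (ξ_n)_{n≥1} be a sequence of random variables on a probability space (Ω,B,P) such that ξ_n → 0 almost surely as n → ∞. Then there exist a non-negative, almost surely finite random variable η and a deterministic sequence (ε_n)_{n≥1} of positive reals converging to 0 such that, almost surely, |ξ_n| ≤ η · ε_n for every n. -/
open MeasureTheory Filter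

/-!
By Egorov's theorem, `ξ_n → 0` uniformly on each of countably many sets `G_k` whose union has
full measure. Countably many uniform convergences share one deterministic rate `ε_n → 0`, which is
where the factorization comes from: on `G_k` we have `|ξ_n| ≤ ε_n` for all large `n`, so
`η := sup_n |ξ_n| / ε_n` is finite there.
-/

theorem Nat.exists_tendsto_atTop_eventually_diag {p : ℕ → ℕ → Prop}
    (hp : ∀ j, ∀ᶠ n in atTop, p j n) :
    ∃ c : ℕ → ℕ, Tendsto c atTop atTop ∧ ∀ᶠ n in atTop, p (c n) n := by
  simp only [eventually_atTop] at hp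
  choose N hN using hp
  refine ⟨fun n => Nat.findGreatest (fun j => N j ≤ n) n, ?_, ?_⟩
  · refine tendsto_atTop.2 fun j => eventually_atTop.2 ⟨max j (N j), fun n hn => ?_⟩
    exact Nat.le_findGreatest (le_of_max_le_left hn) (le_of_max_le_right hn)
  · refine eventually_atTop.2 ⟨N 0, fun n hn => hN _ _ ?_⟩
    exact Nat.findGreatest_spec (P := fun j => N j ≤ n) (Nat.zero_le n) hn

theorem exists_rate_of_forall_tendstoUniformlyOn {α β : Type*} [PseudoMetricSpace β]
    {f : ℕ → α → β} {g : α → β} {G : ℕ → Set α}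
    (hG : ∀ k, TendstoUniformlyOn f g atTop (G k)) :
    ∃ ε : ℕ → ℝ, (∀ n, 0 < ε n) ∧ Tendsto ε atTop (nhds 0) ∧
      ∀ k, ∀ᶠ n in atTop, ∀ x ∈ G k, dist (g x) (f n x) ≤ ε n := by
  have hclose : ∀ j, ∀ᶠ n in atTop, ∀ k ≤ j, ∀ x ∈ G k, dist (g x) (f n x) ≤ 1 / ((j : ℝ) + 1) :=
    fun j => (Set.finite_le_nat j).eventually_all.2 fun k _ =>
      (Metric.tendstoUniformlyOn_iff.1 (hG k) _ Nat.one_div_pos_of_nat).mono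
        fun n hn x hx => (hn x hx).le
  obtain ⟨c, hc, hcn⟩ := Nat.exists_tendsto_atTop_eventually_diag hclose
  refine ⟨fun n => 1 / ((c n : ℝ) + 1), fun n => Nat.one_div_pos_of_nat,
    tendsto_one_div_add_atTop_nhds_zero_nat.comp hc, fun k => ?_⟩
  filter_upwards [hcn, hc.eventually_ge_atTop k] with n hn hkn using hn k hkn

theorem MeasureTheory.exists_tendstoUniformlyOn_ae_exists_mem {α β : Type*} [MeasurableSpace α]
    [PseudoEMetricSpace β] {μ : Measure α} [IsFiniteMeasure μ] {f : ℕ → α → β} {g : α → β}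
    (hf : ∀ n, StronglyMeasurable (f n)) (hg : StronglyMeasurable g)
    (hfg : ∀ᵐ x ∂μ, Tendsto (fun n => f n x) atTop (nhds (g x))) :
    ∃ G : ℕ → Set α, (∀ k, TendstoUniformlyOn f g atTop (G k)) ∧ ∀ᵐ x ∂μ, ∃ k, x ∈ G k := by
  choose t _ hμt hunif using fun k : ℕ =>
    tendstoUniformlyOn_of_ae_tendsto' hf hg hfg (Nat.one_div_pos_of_nat (n := k))
  refine ⟨fun k => (t k)ᶜ, hunif, ae_iff.2 (nonpos_iff_eq_zero.1 ?_)⟩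
  have hlim : Tendsto (fun k : ℕ => ENNReal.ofReal (1 / ((k : ℝ) + 1))) atTop (nhds 0) := by
    simpa [Function.comp_def] using
      (ENNReal.continuous_ofReal.tendsto 0).comp tendsto_one_div_add_atTop_nhds_zero_nat
  refine ge_of_tendsto' hlim fun k => (measure_mono fun x hx => ?_).trans (hμt k)
  simpa using not_exists.1 hx k

theorem abs_le_iSup_div_mul_of_eventually_abs_le {a ε : ℕ → ℝ} (hε : ∀ n, 0 < ε n)
    (h : ∀ᶠ n in atTop, |a n| ≤ ε n) (n : ℕ) : |a n| ≤ (⨆ m, |a m| / ε m) * ε n := by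
  have hbdd : BddAbove (Set.range fun m => |a m| / ε m) :=
    (isBoundedUnder_of_eventually_le (h.mono fun m hm => (div_le_one (hε m)).2 hm)).bddAbove_range
  calc |a n| = |a n| / ε n * ε n := (div_mul_cancel₀ _ (hε n).ne').symm
    _ ≤ (⨆ m, |a m| / ε m) * ε n := mul_le_mul_of_nonneg_right (le_ciSup hbdd n) (hε n).le

/-- a sequence of random variables converging to `0` almost surely admits a
factorable bound `|ξ_n| ≤ η · ε_n` with a non-negative finite random variable `η` and a
deterministic positive sequence `ε_n → 0`. -/
theorem factorable_bound_of_ae_tendsto_zero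
    {Ω : Type*} [MeasurableSpace Ω] (P : Measure Ω) [IsProbabilityMeasure P]
    (ξ : ℕ → Ω → ℝ) (hm : ∀ n, Measurable (ξ n))
    (h : ∀ᵐ ω ∂P, Filter.Tendsto (fun n => ξ n ω) Filter.atTop (nhds 0)) :
    ∃ (η : Ω → ℝ) (ε : ℕ → ℝ),
      Measurable η ∧ (∀ ω, 0 ≤ η ω) ∧ (∀ n, 0 < ε n) ∧
      Filter.Tendsto ε Filter.atTop (nhds 0) ∧
      ∀ᵐ ω ∂P, ∀ n, |ξ n ω| ≤ η ω * ε n := by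
  obtain ⟨G, hunif, hcover⟩ := exists_tendstoUniformlyOn_ae_exists_mem
    (fun n => (hm n).stronglyMeasurable) stronglyMeasurable_const h
  obtain ⟨ε, hεpos, hεlim, hεG⟩ := exists_rate_of_forall_tendstoUniformlyOn hunif
  refine ⟨fun ω => ⨆ n, |ξ n ω| / ε n, ε, Measurable.iSup fun n => (hm n).abs.div_const _,
    fun ω => Real.iSup_nonneg fun n => div_nonneg (abs_nonneg _) (hεpos n).le, hεpos, hεlim, ?_⟩
  filter_upwards [hcover] with ω ⟨k, hk⟩
  refine abs_le_iSup_div_mul_of_eventually_abs_le hεpos ((hεG k).mono fun n hn => ?_)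
  simpa using hn ω hk
end
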